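/- Define P_n(a) = (1/(q;q²)_{⌊(n+1)/2⌋}) · ∑_{k=0}^{n} [n choose k]_q · a^k. Then for every nonnegative integer n and ε ∈ {0,1}, the expansion of x^ε ∏_{i=0}^{n-1}(x² - a² q^{2i}) in powers of x, with x^m replaced by P_m(a), evaluates to (-a;q)_{2n+ε} / (q;q²)_{n+ε}. Precisely: ∑_{k=0}^{n} [n choose k]_{q²} (-1)^k a^{2k} q^{2·C(k,2)} · P_{2(n-k)+ε}(a) = (-a;q)_{2n+ε} / (q;q²)_{n+ε}. -/
import Mathlib


open Finset

/-- The q-Pochhammer symbol `(x;q)_n = ∏_{i=0}^{n-1} (1 - x qⁱ)`. -/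
noncomputable def qPoch {K : Type*} [Field K] (x q : K) (n : ℕ) : K :=
  ∏ i ∈ Finset.range n, (1 - x * q ^ i)

/-- The Gaussian binomial coefficient `[n choose k]_q`. -/
noncomputable def qBinom {K : Type*} [Field K] (q : K) (n k : ℕ) : K :=
  qPoch q q n / (qPoch q q k * qPoch q q (n - k))

/-- Cigler's moment sequence `P_n(a)`. -/
noncomputable def cigP {K : Type*} [Field K] (a q : K) (n : ℕ) : K :=
  (1 / qPoch q (q ^ 2) ((n + 1) / 2)) * ∑ k ∈ Finset.range (n + 1), qBinom q n k * a ^ k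

/-- The recurrence coefficients `λ_n` of Definition 1. -/
noncomputable def cigLam {K : Type*} [Field K] (a q : K) (n : ℕ) : K :=
  if Even n then
    q ^ n * (1 + a) ^ 2 * (1 - q ^ (n - 1)) * (1 - q ^ n) / (1 - q ^ (2 * n - 1)) ^ 2
  else
    -((a + q ^ n) * (a + q ^ (n - 1)) * (1 + a * q ^ (n - 1)) * (1 + a * q ^ n)) /
      ((1 + a) ^ 2 * (1 - q ^ (2 * n - 1)) ^ 2)

/-- The recurrence coefficients `b_n` of Definition 1 (integer exponents via `zpow`). -/
noncomputable def cigB {K : Type*} [Field K] (a q : K) (n : ℕ) : K :=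
  if Even n then
    -(1 - q) / ((1 - q ^ (2 * (n : ℤ) + 1)) * (1 - q ^ (2 * (n : ℤ) - 1)) * (1 + a)) *
      (a * (1 - q ^ (2 * (n : ℤ) - 1)) * (1 - q ^ ((n : ℤ) + 1)) * (1 - q ^ (n : ℤ)) / (1 - q)
        - q ^ (n : ℤ) * ((1 - q ^ ((n : ℤ) - 1)) / (1 - q)
            + q ^ ((n : ℤ) + 1) * (1 - q ^ (n : ℤ)) / (1 - q)) * (1 + a) ^ 2)
  else
    (1 - q) / ((1 - q ^ (2 * (n : ℤ) + 1)) * (1 - q ^ (2 * (n : ℤ) - 1)) * (1 + a)) *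
      (a * (1 - q ^ (2 * (n : ℤ) + 1)) * (1 - q ^ ((n : ℤ) - 1)) * (1 - q ^ (n : ℤ)) / (1 - q)
        - q ^ ((n : ℤ) + 1) * ((1 - q ^ (n : ℤ)) / (1 - q)
            + q ^ ((n : ℤ) - 2) * (1 - q ^ ((n : ℤ) + 1)) / (1 - q)) * (1 + a) ^ 2)

/-- The even-indexed expansion coefficients `a_{2k}^{(n)}` of Proposition 2. -/
noncomputable def aEven {K : Type*} [Field K] (a q : K) (n k : ℕ) : K :=
  qPoch (-(a * q ^ (2 * (n : ℤ) - 1))) q⁻¹ (2 * k) /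
      qPoch (q ^ (4 * (n : ℤ) - 2 * (k : ℤ) - 1)) (q ^ 2)⁻¹ k * qBinom (q ^ 2) n k

/-- The odd-indexed expansion coefficients `a_{2k+1}^{(n)}` of Proposition 2. -/
noncomputable def aOdd {K : Type*} [Field K] (a q : K) (n k : ℕ) : K :=
  (1 + a) * qPoch (-(a * q ^ (2 * (n : ℤ) - 1))) q⁻¹ (2 * k) /
      qPoch (q ^ (4 * (n : ℤ) - 2 * (k : ℤ) - 1)) (q ^ 2)⁻¹ (k + 1) *
    qBinom (q ^ 2) n (k + 1) * (1 - q ^ (2 * (k + 1)))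

section Aux
variable {K : Type*} [Field K]

theorem qPoch_zero' (x q : K) : qPoch x q 0 = 1 := by simp [qPoch]

theorem qPoch_succ' (x q : K) (n : ℕ) :
    qPoch x q (n + 1) = qPoch x q n * (1 - x * q ^ n) := by
  simp [qPoch, Finset.prod_range_succ]

theorem one_sub_ne (q : K) (hq : ∀ i : ℕ, 1 ≤ i → q ^ i ≠ 1) (i : ℕ) (hi : 1 ≤ i) :
    (1 : K) - q ^ i ≠ 0 := by
  rw [sub_ne_zero]; exact fun h => hq i hi h.symm

theorem qPoch_ne (q : K) (hq : ∀ i : ℕ, 1 ≤ i → q ^ i ≠ 1) (m : ℕ) :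
    qPoch q q m ≠ 0 := by
  unfold qPoch
  refine Finset.prod_ne_zero_iff.2 fun i _ => ?_
  have h : q * q ^ i = q ^ (i + 1) := by ring
  rw [h, sub_ne_zero]
  exact fun h' => hq (i + 1) (by omega) h'.symm

theorem hq_sq (q : K) (hq : ∀ i : ℕ, 1 ≤ i → q ^ i ≠ 1) :
    ∀ i : ℕ, 1 ≤ i → (q ^ 2) ^ i ≠ 1 := by
  intro i hi
  rw [← pow_mul]
  exact hq (2 * i) (by omega)

theorem qPoch_q_sq_ne (q : K) (hq : ∀ i : ℕ, 1 ≤ i → q ^ i ≠ 1) (m : ℕ) :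
    qPoch q (q ^ 2) m ≠ 0 := by
  unfold qPoch
  refine Finset.prod_ne_zero_iff.2 fun i _ => ?_
  have h : q * (q ^ 2) ^ i = q ^ (2 * i + 1) := by rw [← pow_mul]; ring
  rw [h, sub_ne_zero]
  exact fun h' => hq _ (by omega) h'.symm

theorem qBinom_zero (q : K) (hq : ∀ i : ℕ, 1 ≤ i → q ^ i ≠ 1) (n : ℕ) :
    qBinom q n 0 = 1 := by
  unfold qBinom
  rw [Nat.sub_zero, qPoch_zero', one_mul, div_self (qPoch_ne q hq n)]

theorem qBinom_self (q : K) (hq : ∀ i : ℕ, 1 ≤ i → q ^ i ≠ 1) (n : ℕ) :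
    qBinom q n n = 1 := by
  unfold qBinom
  rw [Nat.sub_self, qPoch_zero', mul_one, div_self (qPoch_ne q hq n)]

theorem qBinom_pascal1 (q : K) (hq : ∀ i : ℕ, 1 ≤ i → q ^ i ≠ 1) (k m : ℕ) :
    qBinom q (k + m + 2) (k + 1) =
      qBinom q (k + m + 1) (k + 1) + q ^ (m + 1) * qBinom q (k + m + 1) k := by
  unfold qBinom
  have h1 : k + m + 2 - (k + 1) = m + 1 := by omega
  have h2 : k + m + 1 - (k + 1) = m := by omega
  have h3 : k + m + 1 - k = m + 1 := by omega
  rw [h1, h2, h3]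
  rw [show k + m + 2 = (k + m + 1) + 1 from rfl, qPoch_succ' q q (k + m + 1),
    qPoch_succ' q q k, qPoch_succ' q q m]
  have nk := qPoch_ne q hq k
  have nm := qPoch_ne q hq m
  have nn := qPoch_ne q hq (k + m + 1)
  have e1 : (1 : K) - q * q ^ k ≠ 0 := by
    rw [show q * q ^ k = q ^ (k + 1) by ring]; exact one_sub_ne q hq (k + 1) (by omega)
  have e2 : (1 : K) - q * q ^ m ≠ 0 := by
    rw [show q * q ^ m = q ^ (m + 1) by ring]; exact one_sub_ne q hq (m + 1) (by omega)
  field_simp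
  ring

theorem qBinom_pascal2 (q : K) (hq : ∀ i : ℕ, 1 ≤ i → q ^ i ≠ 1) (k m : ℕ) :
    qBinom q (k + m + 2) (k + 1) =
      q ^ (k + 1) * qBinom q (k + m + 1) (k + 1) + qBinom q (k + m + 1) k := by
  unfold qBinom
  have h1 : k + m + 2 - (k + 1) = m + 1 := by omega
  have h2 : k + m + 1 - (k + 1) = m := by omega
  have h3 : k + m + 1 - k = m + 1 := by omega
  rw [h1, h2, h3]
  rw [show k + m + 2 = (k + m + 1) + 1 from rfl, qPoch_succ' q q (k + m + 1),
    qPoch_succ' q q k, qPoch_succ' q q m]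
  have nk := qPoch_ne q hq k
  have nm := qPoch_ne q hq m
  have nn := qPoch_ne q hq (k + m + 1)
  have e1 : (1 : K) - q * q ^ k ≠ 0 := by
    rw [show q * q ^ k = q ^ (k + 1) by ring]; exact one_sub_ne q hq (k + 1) (by omega)
  have e2 : (1 : K) - q * q ^ m ≠ 0 := by
    rw [show q * q ^ m = q ^ (m + 1) by ring]; exact one_sub_ne q hq (m + 1) (by omega)
  field_simp
  ring

theorem qBinom_absorb (q : K) (hq : ∀ i : ℕ, 1 ≤ i → q ^ i ≠ 1) (k r : ℕ) :
    (1 - q ^ (r + 1)) * qBinom q (k + r + 1) k = (1 - q ^ (k + r + 1)) * qBinom q (k + r) k := by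
  unfold qBinom
  have h1 : k + r + 1 - k = r + 1 := by omega
  have h2 : k + r - k = r := by omega
  rw [h1, h2]
  rw [show k + r + 1 = (k + r) + 1 from rfl, qPoch_succ' q q (k + r), qPoch_succ' q q r]
  have nk := qPoch_ne q hq k
  have nr := qPoch_ne q hq r
  have e2 : (1 : K) - q * q ^ r ≠ 0 := by
    rw [show q * q ^ r = q ^ (r + 1) by ring]; exact one_sub_ne q hq (r + 1) (by omega)
  field_simp
  ring

end Aux

section Aux2
variable {K : Type*} [Field K]

/-- The Rogers–Szegő polynomial. -/
noncomputable def rsz (a q : K) (m : ℕ) : K :=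
  ∑ k ∈ Finset.range (m + 1), qBinom q m k * a ^ k

noncomputable def rszW (a q : K) (m : ℕ) : K :=
  ∑ k ∈ Finset.range (m + 1), q ^ (m - k) * qBinom q m k * a ^ k

theorem rsz_stepA (a q : K) (hq : ∀ i : ℕ, 1 ≤ i → q ^ i ≠ 1) (m : ℕ) :
    rsz a q (m + 2) = rsz a q (m + 1) + a * rszW a q (m + 1) := by
  have hL : rsz a q (m + 2) =
      (∑ k ∈ Finset.range (m + 1), qBinom q (m + 2) (k + 1) * a ^ (k + 1))
        + qBinom q (m + 2) (m + 2) * a ^ (m + 2) + qBinom q (m + 2) 0 * a ^ 0 := by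
    rw [rsz, Finset.sum_range_succ' (fun k => qBinom q (m + 2) k * a ^ k) (m + 2),
      Finset.sum_range_succ]
  have hsplit : ∀ k ∈ Finset.range (m + 1),
      qBinom q (m + 2) (k + 1) * a ^ (k + 1) =
        qBinom q (m + 1) (k + 1) * a ^ (k + 1)
          + a * (q ^ (m + 1 - k) * qBinom q (m + 1) k * a ^ k) := by
    intro k hk
    rw [Finset.mem_range] at hk
    obtain ⟨t, rfl⟩ : ∃ t, m = k + t := ⟨m - k, by omega⟩
    have h1 : k + t + 1 - k = t + 1 := by omega
    rw [h1, show k + t + 2 = k + (t) + 2 from rfl, qBinom_pascal1 q hq k t]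
    ring
  rw [hL, Finset.sum_congr rfl hsplit, Finset.sum_add_distrib]
  have hR1 : rsz a q (m + 1) =
      (∑ k ∈ Finset.range (m + 1), qBinom q (m + 1) (k + 1) * a ^ (k + 1))
        + qBinom q (m + 1) 0 * a ^ 0 := by
    rw [rsz, Finset.sum_range_succ' (fun k => qBinom q (m + 1) k * a ^ k) (m + 1)]
  have hR2 : rszW a q (m + 1) =
      (∑ k ∈ Finset.range (m + 1), q ^ (m + 1 - k) * qBinom q (m + 1) k * a ^ k)
        + q ^ (m + 1 - (m + 1)) * qBinom q (m + 1) (m + 1) * a ^ (m + 1) := by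
    rw [rszW, Finset.sum_range_succ]
  rw [hR1, hR2, qBinom_zero q hq, qBinom_zero q hq, qBinom_self q hq, qBinom_self q hq,
    Nat.sub_self, mul_add, Finset.mul_sum]
  ring

theorem rsz_stepB (a q : K) (hq : ∀ i : ℕ, 1 ≤ i → q ^ i ≠ 1) (m : ℕ) :
    rszW a q (m + 1) = rsz a q (m + 1) - (1 - q ^ (m + 1)) * rsz a q m := by
  have key : rsz a q (m + 1) - rszW a q (m + 1) = (1 - q ^ (m + 1)) * rsz a q m := by
    rw [rsz, rszW, ← Finset.sum_sub_distrib]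
    have : ∀ k ∈ Finset.range (m + 2),
        qBinom q (m + 1) k * a ^ k - q ^ (m + 1 - k) * qBinom q (m + 1) k * a ^ k
          = ((1 - q ^ (m + 1 - k)) * qBinom q (m + 1) k) * a ^ k := by
      intro k _; ring
    rw [Finset.sum_congr rfl this, Finset.sum_range_succ]
    rw [Nat.sub_self, pow_zero, sub_self, zero_mul, zero_mul, add_zero]
    rw [rsz, Finset.mul_sum]
    refine Finset.sum_congr rfl fun k hk => ?_
    rw [Finset.mem_range] at hk
    obtain ⟨t, rfl⟩ : ∃ t, m = k + t := ⟨m - k, by omega⟩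
    have h1 : k + t + 1 - k = t + 1 := by omega
    rw [h1, show k + t + 1 = k + t + 1 from rfl, qBinom_absorb q hq k t]
    ring
  linear_combination -key

theorem rsz_rec (a q : K) (hq : ∀ i : ℕ, 1 ≤ i → q ^ i ≠ 1) (m : ℕ) :
    rsz a q (m + 2) = (1 + a) * rsz a q (m + 1) - (1 - q ^ (m + 1)) * a * rsz a q m := by
  rw [rsz_stepA a q hq m, rsz_stepB a q hq m]; ring

theorem cigP_eq (a q : K) (n : ℕ) :
    cigP a q n = rsz a q n / qPoch q (q ^ 2) ((n + 1) / 2) := by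
  rw [cigP, rsz, one_div, inv_mul_eq_div]

theorem cigP_even (a q : K) (j : ℕ) :
    cigP a q (2 * j) = rsz a q (2 * j) / qPoch q (q ^ 2) j := by
  rw [cigP_eq, show (2 * j + 1) / 2 = j by omega]

theorem cigP_odd (a q : K) (j : ℕ) :
    cigP a q (2 * j + 1) = rsz a q (2 * j + 1) / qPoch q (q ^ 2) (j + 1) := by
  rw [cigP_eq, show (2 * j + 1 + 1) / 2 = j + 1 by omega]

theorem qPoch_q_sq_succ (q : K) (j : ℕ) :
    qPoch q (q ^ 2) (j + 1) = qPoch q (q ^ 2) j * (1 - q ^ (2 * j + 1)) := by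
  rw [qPoch_succ']
  congr 2
  rw [← pow_mul]; ring

theorem cigP_zero (a q : K) : cigP a q 0 = 1 := by
  have : rsz a q 0 = 1 := by
    simp [rsz, qBinom, qPoch]
  rw [show (0 : ℕ) = 2 * 0 from rfl, cigP_even, this, qPoch_zero', div_one]

theorem cigP_one (a q : K) (hq : ∀ i : ℕ, 1 ≤ i → q ^ i ≠ 1) :
    cigP a q 1 = (1 + a) / (1 - q) := by
  have h1 : rsz a q 1 = 1 + a := by
    rw [rsz]
    rw [Finset.sum_range_succ, Finset.sum_range_one, qBinom_zero q hq, qBinom_self q hq]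
    ring
  rw [show (1 : ℕ) = 2 * 0 + 1 from rfl, cigP_odd, h1, qPoch_q_sq_succ, qPoch_zero', one_mul]
  norm_num

theorem cigP_rec1 (a q : K) (hq : ∀ i : ℕ, 1 ≤ i → q ^ i ≠ 1) (j : ℕ) :
    cigP a q (2 * j + 2) = (1 + a) * cigP a q (2 * j + 1) - a * cigP a q (2 * j) := by
  rw [show 2 * j + 2 = 2 * (j + 1) from by ring, cigP_even, cigP_odd, cigP_even,
    qPoch_q_sq_succ, show 2 * (j + 1) = (2 * j + 1) + 1 from by ring, rsz_rec a q hq (2 * j)]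
  have hD := qPoch_q_sq_ne q hq j
  have hE := one_sub_ne q hq (2 * j + 1) (by omega)
  field_simp

theorem cigP_rec2 (a q : K) (hq : ∀ i : ℕ, 1 ≤ i → q ^ i ≠ 1) (j : ℕ) :
    (1 - q ^ (2 * j + 3)) * cigP a q (2 * j + 3) =
      (1 + a) * cigP a q (2 * j + 2) - a * ((1 - q ^ (2 * j + 2)) * cigP a q (2 * j + 1)) := by
  have h3 : cigP a q (2 * j + 3) = rsz a q (2 * j + 3) / qPoch q (q ^ 2) (j + 2) := by
    rw [show 2 * j + 3 = 2 * (j + 1) + 1 from by ring, cigP_odd]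
  have h2 : cigP a q (2 * j + 2) = rsz a q (2 * j + 2) / qPoch q (q ^ 2) (j + 1) := by
    rw [show 2 * j + 2 = 2 * (j + 1) from by ring, cigP_even]
  have h1 : cigP a q (2 * j + 1) = rsz a q (2 * j + 1) / qPoch q (q ^ 2) (j + 1) :=
    cigP_odd a q j
  have hr := rsz_rec a q hq (2 * j + 1)
  rw [show 2 * j + 1 + 2 = 2 * j + 3 from by ring, show 2 * j + 1 + 1 = 2 * j + 2 from by ring]
    at hr
  have hs : qPoch q (q ^ 2) (j + 2) = qPoch q (q ^ 2) (j + 1) * (1 - q ^ (2 * j + 3)) := by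
    rw [show j + 2 = (j + 1) + 1 from rfl, qPoch_q_sq_succ q (j + 1)]
    rw [show 2 * (j + 1) + 1 = 2 * j + 3 from by ring]
  rw [h3, h2, h1, hr, hs]
  have hD := qPoch_q_sq_ne q hq (j + 1)
  have hE2 := one_sub_ne q hq (2 * j + 3) (by omega)
  field_simp

end Aux2

section Aux3
variable {K : Type*} [Field K]

/-- Expansion coefficients of `x^ε ∏ (x² - a² q^{2i})`. -/
noncomputable def cigc (a q : K) (n k : ℕ) : K :=
  qBinom (q ^ 2) n k * (-1 : K) ^ k * a ^ (2 * k) * q ^ (2 * Nat.choose k 2)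

noncomputable def FF (a q : K) (n ε : ℕ) : K :=
  ∑ k ∈ Finset.range (n + 1), cigc a q n k * cigP a q (2 * (n - k) + ε)

noncomputable def GG (a q : K) (n ε : ℕ) : K :=
  ∑ k ∈ Finset.range (n + 1), cigc a q n k * cigP a q (2 * (n - k) + 2 + ε)

theorem choose2_succ (k : ℕ) : 2 * Nat.choose (k + 1) 2 = 2 * Nat.choose k 2 + 2 * k := by
  rw [Nat.choose_succ_succ, Nat.choose_one_right]; ring

theorem pow_choose2_succ (q : K) (k : ℕ) :
    q ^ (2 * Nat.choose (k + 1) 2) = q ^ (2 * Nat.choose k 2) * q ^ (2 * k) := by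
  rw [choose2_succ, pow_add]

theorem cigc_zero (a q : K) (hq : ∀ i : ℕ, 1 ≤ i → q ^ i ≠ 1) (n : ℕ) :
    cigc a q n 0 = 1 := by
  simp [cigc, qBinom_zero (q ^ 2) (hq_sq q hq) n]

theorem cigc_pascal (a q : K) (hq : ∀ i : ℕ, 1 ≤ i → q ^ i ≠ 1) (k t : ℕ) :
    cigc a q (k + t + 2) (k + 1) =
      cigc a q (k + t + 1) (k + 1) - a ^ 2 * q ^ (2 * (k + t + 1)) * cigc a q (k + t + 1) k := by
  unfold cigc
  rw [qBinom_pascal1 (q ^ 2) (hq_sq q hq) k t, pow_choose2_succ, ← pow_mul]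
  ring

theorem cigc_pascal_top (a q : K) (hq : ∀ i : ℕ, 1 ≤ i → q ^ i ≠ 1) (n : ℕ) :
    cigc a q (n + 1) (n + 1) = -(a ^ 2 * q ^ (2 * n)) * cigc a q n n := by
  unfold cigc
  rw [qBinom_self (q ^ 2) (hq_sq q hq), qBinom_self (q ^ 2) (hq_sq q hq), pow_choose2_succ]
  ring

theorem cigc_pascal2 (a q : K) (hq : ∀ i : ℕ, 1 ≤ i → q ^ i ≠ 1) (k t : ℕ) :
    cigc a q (k + t + 2) (k + 1) =
      q ^ (2 * k + 2) * cigc a q (k + t + 1) (k + 1) - a ^ 2 * q ^ (2 * k) * cigc a q (k + t + 1) k := by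
  unfold cigc
  rw [qBinom_pascal2 (q ^ 2) (hq_sq q hq) k t, pow_choose2_succ, ← pow_mul]
  ring

theorem cigc_absorb (a q : K) (hq : ∀ i : ℕ, 1 ≤ i → q ^ i ≠ 1) (k t : ℕ) :
    (1 - q ^ (2 * (t + 1))) * cigc a q (k + t + 1) k =
      (1 - q ^ (2 * (k + t + 1))) * cigc a q (k + t) k := by
  unfold cigc
  have h := qBinom_absorb (q ^ 2) (hq_sq q hq) k t
  rw [← pow_mul, ← pow_mul] at h
  calc (1 - q ^ (2 * (t + 1))) * (qBinom (q^2) (k+t+1) k * (-1:K)^k * a^(2*k) * q^(2*Nat.choose k 2))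
      = ((1 - q ^ (2 * (t+1))) * qBinom (q^2) (k+t+1) k) * ((-1:K)^k * a^(2*k) * q^(2*Nat.choose k 2)) := by ring
    _ = ((1 - q ^ (2 * (k+t+1))) * qBinom (q^2) (k+t) k) * ((-1:K)^k * a^(2*k) * q^(2*Nat.choose k 2)) := by rw [h]
    _ = _ := by ring

/-- Lemma A : peeling the top factor of the product. -/
theorem FF_succ (a q : K) (hq : ∀ i : ℕ, 1 ≤ i → q ^ i ≠ 1) (n ε : ℕ) :
    FF a q (n + 1) ε = GG a q n ε - a ^ 2 * q ^ (2 * n) * FF a q n ε := by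
  have hL : FF a q (n + 1) ε =
      (∑ k ∈ Finset.range n, cigc a q (n + 1) (k + 1) * cigP a q (2 * (n + 1 - (k + 1)) + ε))
        + cigc a q (n + 1) (n + 1) * cigP a q (2 * (n + 1 - (n + 1)) + ε)
        + cigc a q (n + 1) 0 * cigP a q (2 * (n + 1 - 0) + ε) := by
    rw [FF, Finset.sum_range_succ' (fun k => cigc a q (n + 1) k * cigP a q (2 * (n + 1 - k) + ε))
      (n + 1), Finset.sum_range_succ]
  have hmid : ∀ k ∈ Finset.range n,
      cigc a q (n + 1) (k + 1) * cigP a q (2 * (n + 1 - (k + 1)) + ε) =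
        cigc a q n (k + 1) * cigP a q (2 * (n - k) + ε)
          - a ^ 2 * q ^ (2 * n) * (cigc a q n k * cigP a q (2 * (n - k) + ε)) := by
    intro k hk
    rw [Finset.mem_range] at hk
    obtain ⟨t, rfl⟩ : ∃ t, n = k + t + 1 := ⟨n - k - 1, by omega⟩
    have e1 : 2 * (k + t + 1 + 1 - (k + 1)) + ε = 2 * (k + t + 1 - k) + ε := by omega
    rw [e1, show k + t + 1 + 1 = k + t + 2 from rfl, cigc_pascal a q hq k t]
    ring
  rw [hL, Finset.sum_congr rfl hmid, Finset.sum_sub_distrib, ← Finset.mul_sum]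
  have hG : GG a q n ε =
      (∑ k ∈ Finset.range n, cigc a q n (k + 1) * cigP a q (2 * (n - k) + ε))
        + cigc a q n 0 * cigP a q (2 * (n - 0) + 2 + ε) := by
    rw [GG, Finset.sum_range_succ' (fun k => cigc a q n k * cigP a q (2 * (n - k) + 2 + ε)) n]
    congr 1
    refine Finset.sum_congr rfl fun k hk => ?_
    rw [Finset.mem_range] at hk
    have e : 2 * (n - (k + 1)) + 2 + ε = 2 * (n - k) + ε := by omega
    rw [e]
  have hF : FF a q n ε =
      (∑ k ∈ Finset.range n, cigc a q n k * cigP a q (2 * (n - k) + ε))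
        + cigc a q n n * cigP a q (2 * (n - n) + ε) := by
    rw [FF, Finset.sum_range_succ]
  have hb1 : cigc a q (n + 1) (n + 1) * cigP a q (2 * (n + 1 - (n + 1)) + ε) =
      -(a ^ 2 * q ^ (2 * n)) * (cigc a q n n * cigP a q (2 * (n - n) + ε)) := by
    rw [cigc_pascal_top a q hq n, show 2 * (n + 1 - (n + 1)) + ε = 2 * (n - n) + ε from by omega]
    ring
  have hb2 : cigc a q (n + 1) 0 * cigP a q (2 * (n + 1 - 0) + ε) =
      cigc a q n 0 * cigP a q (2 * (n - 0) + 2 + ε) := by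
    rw [cigc_zero a q hq, cigc_zero a q hq,
      show 2 * (n + 1 - 0) + ε = 2 * (n - 0) + 2 + ε from by omega]
  rw [hb1, hb2, hG, hF]
  ring

/-- Lemma B : the shifted even sum. -/
theorem GG_zero_eq (a q : K) (hq : ∀ i : ℕ, 1 ≤ i → q ^ i ≠ 1) (n : ℕ) :
    GG a q n 0 = (1 + a) * FF a q n 1 - a * FF a q n 0 := by
  have hter : ∀ k ∈ Finset.range (n + 1),
      cigc a q n k * cigP a q (2 * (n - k) + 2 + 0) =
        (1 + a) * (cigc a q n k * cigP a q (2 * (n - k) + 1))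
          - a * (cigc a q n k * cigP a q (2 * (n - k) + 0)) := by
    intro k _
    rw [show 2 * (n - k) + 2 + 0 = 2 * (n - k) + 2 from rfl,
      show 2 * (n - k) + 0 = 2 * (n - k) from rfl, cigP_rec1 a q hq (n - k)]
    ring
  rw [GG, Finset.sum_congr rfl hter, Finset.sum_sub_distrib, ← Finset.mul_sum, ← Finset.mul_sum,
    FF, FF]

theorem SumID_II (a q : K) (hq : ∀ i : ℕ, 1 ≤ i → q ^ i ≠ 1) (n : ℕ) :
    FF a q (n + 1) 0 = (1 + a) * FF a q n 1 - a * FF a q n 0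
      - a ^ 2 * q ^ (2 * n) * FF a q n 0 := by
  have h := FF_succ a q hq n 0
  rw [GG_zero_eq a q hq n] at h
  linear_combination h

end Aux3

section Aux4
variable {K : Type*} [Field K]

theorem lem_iii (a q : K) (n : ℕ) :
    ∑ k ∈ Finset.range (n + 2),
        cigc a q (n + 1) k * ((1 - q ^ (2 * (n + 1 - k) + 1)) * cigP a q (2 * (n + 1 - k) + 1)) =
      FF a q (n + 1) 1 - ∑ k ∈ Finset.range (n + 2),
        cigc a q (n + 1) k * (q ^ (2 * (n + 1 - k) + 1) * cigP a q (2 * (n + 1 - k) + 1)) := by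
  rw [FF, ← Finset.sum_sub_distrib]
  exact Finset.sum_congr rfl fun k _ => by ring

theorem lem_ii (a q : K) (hq : ∀ i : ℕ, 1 ≤ i → q ^ i ≠ 1) (n : ℕ) :
    ∑ k ∈ Finset.range (n + 2),
        cigc a q (n + 1) k * ((1 - q ^ (2 * (n + 1 - k))) * cigP a q (2 * (n + 1 - k) - 1)) =
      (1 - q ^ (2 * n + 2)) * FF a q n 1 := by
  rw [Finset.sum_range_succ]
  rw [show 2 * (n + 1 - (n + 1)) = 0 from by omega, pow_zero, sub_self, zero_mul, mul_zero,
    add_zero]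
  have hter : ∀ k ∈ Finset.range (n + 1),
      cigc a q (n + 1) k * ((1 - q ^ (2 * (n + 1 - k))) * cigP a q (2 * (n + 1 - k) - 1)) =
        (1 - q ^ (2 * n + 2)) * (cigc a q n k * cigP a q (2 * (n - k) + 1)) := by
    intro k hk
    rw [Finset.mem_range] at hk
    obtain ⟨t, rfl⟩ : ∃ t, n = k + t := ⟨n - k, by omega⟩
    have e1 : 2 * (k + t + 1 - k) = 2 * (t + 1) := by omega
    have e2 : 2 * (k + t + 1 - k) - 1 = 2 * (k + t - k) + 1 := by omega
    rw [e2, e1, show 2 * (k + t) + 2 = 2 * (k + t + 1) from by ring]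
    calc cigc a q (k + t + 1) k * ((1 - q ^ (2 * (t + 1))) * cigP a q (2 * (k + t - k) + 1))
        = ((1 - q ^ (2 * (t + 1))) * cigc a q (k + t + 1) k) * cigP a q (2 * (k + t - k) + 1) := by
          ring
      _ = ((1 - q ^ (2 * (k + t + 1))) * cigc a q (k + t) k) * cigP a q (2 * (k + t - k) + 1) := by
          rw [cigc_absorb a q hq k t]
      _ = _ := by ring
  rw [Finset.sum_congr rfl hter, ← Finset.mul_sum, FF]

theorem lem_i (a q : K) (hq : ∀ i : ℕ, 1 ≤ i → q ^ i ≠ 1) (n : ℕ) :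
    ∑ k ∈ Finset.range (n + 2),
        cigc a q (n + 1) k * ((1 - q ^ (2 * (n + 1 - k) + 1)) * cigP a q (2 * (n + 1 - k) + 1)) =
      (1 + a) * FF a q (n + 1) 0 - a * ((1 - q ^ (2 * n + 2)) * FF a q n 1) := by
  have hter : ∀ k ∈ Finset.range (n + 2),
      cigc a q (n + 1) k * ((1 - q ^ (2 * (n + 1 - k) + 1)) * cigP a q (2 * (n + 1 - k) + 1)) =
        (1 + a) * (cigc a q (n + 1) k * cigP a q (2 * (n + 1 - k) + 0))
          - a * (cigc a q (n + 1) k *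
              ((1 - q ^ (2 * (n + 1 - k))) * cigP a q (2 * (n + 1 - k) - 1))) := by
    intro k hk
    rw [Finset.mem_range] at hk
    rcases Nat.lt_or_ge k (n + 1) with hk' | hk'
    · obtain ⟨t, rfl⟩ : ∃ t, n = k + t := ⟨n - k, by omega⟩
      have e1 : 2 * (k + t + 1 - k) + 1 = 2 * t + 3 := by omega
      have e2 : 2 * (k + t + 1 - k) + 0 = 2 * t + 2 := by omega
      have e3 : 2 * (k + t + 1 - k) = 2 * t + 2 := by omega
      have e4 : 2 * (k + t + 1 - k) - 1 = 2 * t + 1 := by omega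
      rw [e1, e2, e4, e3, mul_comm (cigc a q (k + t + 1) k), mul_comm (cigc a q (k + t + 1) k),
        mul_comm (cigc a q (k + t + 1) k), cigP_rec2 a q hq t]
      ring
    · have hk2 : k = n + 1 := by omega
      subst hk2
      have e1 : 2 * (n + 1 - (n + 1)) = 0 := by omega
      rw [e1]
      norm_num [cigP_one a q hq, cigP_zero]
      have h1q := one_sub_ne q hq 1 (by omega)
      rw [pow_one] at h1q
      field_simp
  rw [Finset.sum_congr rfl hter, Finset.sum_sub_distrib, ← Finset.mul_sum, ← Finset.mul_sum,
    lem_ii a q hq n]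
  simp only [FF, show n + 1 + 1 = n + 2 from rfl]

theorem lem_iv (a q : K) (hq : ∀ i : ℕ, 1 ≤ i → q ^ i ≠ 1) (n : ℕ) :
    ∑ k ∈ Finset.range (n + 2),
        cigc a q (n + 1) k * (q ^ (2 * (n + 1 - k) + 1) * cigP a q (2 * (n + 1 - k) + 1)) =
      q ^ (2 * n + 3) * GG a q n 1 - a ^ 2 * q ^ (2 * n + 1) * FF a q n 1 := by
  rw [Finset.sum_range_succ,
    Finset.sum_range_succ' (fun k => cigc a q (n + 1) k *
      (q ^ (2 * (n + 1 - k) + 1) * cigP a q (2 * (n + 1 - k) + 1))) n]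
  have hmid : ∀ k ∈ Finset.range n,
      cigc a q (n + 1) (k + 1) *
          (q ^ (2 * (n + 1 - (k + 1)) + 1) * cigP a q (2 * (n + 1 - (k + 1)) + 1)) =
        q ^ (2 * n + 3) * (cigc a q n (k + 1) * cigP a q (2 * (n - k) + 1))
          - a ^ 2 * q ^ (2 * n + 1) * (cigc a q n k * cigP a q (2 * (n - k) + 1)) := by
    intro k hk
    rw [Finset.mem_range] at hk
    obtain ⟨t, rfl⟩ : ∃ t, n = k + t + 1 := ⟨n - k - 1, by omega⟩
    have e1 : 2 * (k + t + 1 + 1 - (k + 1)) + 1 = 2 * (k + t + 1 - k) + 1 := by omega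
    have e2 : 2 * (k + t + 1 - k) + 1 = 2 * t + 3 := by omega
    rw [e1, e2, show k + t + 1 + 1 = k + t + 2 from rfl, cigc_pascal2 a q hq k t,
      show 2 * (k + t + 1) + 3 = 2 * k + 2 + (2 * t + 3) from by ring,
      show 2 * (k + t + 1) + 1 = 2 * k + (2 * t + 3) from by ring, pow_add, pow_add]
    ring
  rw [Finset.sum_congr rfl hmid, Finset.sum_sub_distrib, ← Finset.mul_sum, ← Finset.mul_sum]
  have hG : GG a q n 1 =
      (∑ k ∈ Finset.range n, cigc a q n (k + 1) * cigP a q (2 * (n - k) + 1))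
        + cigc a q n 0 * cigP a q (2 * (n - 0) + 2 + 1) := by
    rw [GG, Finset.sum_range_succ' (fun k => cigc a q n k * cigP a q (2 * (n - k) + 2 + 1)) n]
    congr 1
    refine Finset.sum_congr rfl fun k hk => ?_
    rw [Finset.mem_range] at hk
    rw [show 2 * (n - (k + 1)) + 2 + 1 = 2 * (n - k) + 1 from by omega]
  have hF : FF a q n 1 =
      (∑ k ∈ Finset.range n, cigc a q n k * cigP a q (2 * (n - k) + 1))
        + cigc a q n n * cigP a q (2 * (n - n) + 1) := by
    rw [FF, Finset.sum_range_succ]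
  have hb0 : cigc a q (n + 1) 0 * (q ^ (2 * (n + 1 - 0) + 1) * cigP a q (2 * (n + 1 - 0) + 1)) =
      q ^ (2 * n + 3) * (cigc a q n 0 * cigP a q (2 * (n - 0) + 2 + 1)) := by
    rw [cigc_zero a q hq, cigc_zero a q hq, show 2 * (n + 1 - 0) + 1 = 2 * n + 3 from by omega,
      show 2 * (n - 0) + 2 + 1 = 2 * n + 3 from by omega]
    ring
  have hbtop : cigc a q (n + 1) (n + 1) *
      (q ^ (2 * (n + 1 - (n + 1)) + 1) * cigP a q (2 * (n + 1 - (n + 1)) + 1)) =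
        -(a ^ 2 * q ^ (2 * n + 1)) * (cigc a q n n * cigP a q (2 * (n - n) + 1)) := by
    rw [cigc_pascal_top a q hq n, show 2 * (n + 1 - (n + 1)) + 1 = 1 from by omega,
      show 2 * (n - n) + 1 = 1 from by omega, show 2 * n + 1 = 2 * n + 1 from rfl,
      pow_add, pow_one]
    ring
  rw [hb0, hbtop, hG, hF]
  ring

theorem SumID_I (a q : K) (hq : ∀ i : ℕ, 1 ≤ i → q ^ i ≠ 1) (n : ℕ) :
    (1 - q ^ (2 * n + 3)) * FF a q (n + 1) 1 =
      (1 + a) * FF a q (n + 1) 0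
        - a * ((1 - q ^ (2 * n + 2)) * (1 + a * q ^ (2 * n + 1)) * FF a q n 1) := by
  have e1 := lem_i a q hq n
  have e2 := lem_iii a q n
  have e3 := lem_iv a q hq n
  have e4 := FF_succ a q hq n 1
  linear_combination e1 - e2 + e3 - q ^ (2 * n + 3) * e4

end Aux4

section Aux5
variable {K : Type*} [Field K]

theorem main_ind (a q : K) (hq : ∀ i : ℕ, 1 ≤ i → q ^ i ≠ 1) (n : ℕ) :
    FF a q n 0 = qPoch (-a) q (2 * n) / qPoch q (q ^ 2) n ∧
      FF a q n 1 = qPoch (-a) q (2 * n + 1) / qPoch q (q ^ 2) (n + 1) := by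
  induction n with
  | zero =>
    constructor
    · rw [FF, Finset.sum_range_one, cigc_zero a q hq]
      norm_num [cigP_zero, qPoch_zero']
    · rw [FF, Finset.sum_range_one, cigc_zero a q hq]
      rw [show 2 * (0 - 0) + 1 = 1 from rfl, cigP_one a q hq, one_mul]
      simp [qPoch]
  | succ n ih =>
    obtain ⟨h0, h1⟩ := ih
    have hD0 := qPoch_q_sq_ne q hq n
    have hD1 := qPoch_q_sq_ne q hq (n + 1)
    have hE1 := one_sub_ne q hq (2 * n + 1) (by omega)
    have hE3 := one_sub_ne q hq (2 * n + 3) (by omega)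
    have H0 : FF a q (n + 1) 0 = qPoch (-a) q (2 * (n + 1)) / qPoch q (q ^ 2) (n + 1) := by
      rw [SumID_II a q hq n, h0, h1]
      rw [show 2 * (n + 1) = (2 * n + 1) + 1 from by ring, qPoch_succ' (-a) q (2 * n + 1),
        qPoch_succ' (-a) q (2 * n), qPoch_q_sq_succ q n]
      field_simp
      ring
    refine ⟨H0, ?_⟩
    have key := SumID_I a q hq n
    rw [H0, h1] at key
    refine mul_left_cancel₀ hE3 ?_
    rw [key]
    rw [show 2 * (n + 1) + 1 = (2 * n + 2) + 1 from by ring, qPoch_succ' (-a) q (2 * n + 2),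
      show (2 : ℕ) * n + 2 = (2 * n + 1) + 1 from by ring, qPoch_succ' (-a) q (2 * n + 1),
      show 2 * (n + 1) = (2 * n + 1) + 1 from by ring, qPoch_succ' (-a) q (2 * n + 1),
      qPoch_q_sq_succ q (n + 1), qPoch_q_sq_succ q n,
      show 2 * (n + 1) + 1 = 2 * n + 3 from by ring]
    field_simp
    ring
end Aux5

/-- Proposition 1 — modified moments of the sequence `P_n(a)`. -/
theorem modified_moments {K : Type*} [Field K] (a q : K)
    (hq : ∀ i : ℕ, 1 ≤ i → q ^ i ≠ 1) (n ε : ℕ) (hε : ε ≤ 1) :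
    ∑ k ∈ Finset.range (n + 1),
        qBinom (q ^ 2) n k * (-1 : K) ^ k * a ^ (2 * k) * q ^ (2 * Nat.choose k 2) *
          cigP a q (2 * (n - k) + ε) =
      qPoch (-a) q (2 * n + ε) / qPoch q (q ^ 2) (n + ε) := by
  interval_cases ε
  · have h := (main_ind a q hq n).1
    rw [show (∑ k ∈ Finset.range (n + 1),
        qBinom (q ^ 2) n k * (-1 : K) ^ k * a ^ (2 * k) * q ^ (2 * Nat.choose k 2) *
          cigP a q (2 * (n - k) + 0)) = FF a q n 0 from by rw [FF]; rfl, h]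
    norm_num
  · have h := (main_ind a q hq n).2
    rw [show (∑ k ∈ Finset.range (n + 1),
        qBinom (q ^ 2) n k * (-1 : K) ^ k * a ^ (2 * k) * q ^ (2 * Nat.choose k 2) *
          cigP a q (2 * (n - k) + 1)) = FF a q n 1 from by rw [FF]; rfl, h]
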